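/- Let an extended N-series $G_*$ act on an extended N-series $K_*$. For each $m\geq 1$, the map $\tau_m:G_m\to \mathrm{Der}_m(\overline{K}_\bullet)$ sending $g$ to the family $(\tau_m(g)_i)_{i\geq 0}$, $\tau_m(g)_i(aK_{i+1})=[g,a]K_{m+i+1}$, is a group homomorphism, i.e., $\tau_m(gg')=\tau_m(g)+\tau_m(g')$ for all $g,g'\in G_m$. -/

import Mathlib

/-!
Write `[g, a] = g(a) a⁻¹`. The cocycle identity `[gg', a] = [g, [g', a]] ⬝ [g', a] ⬝ [g, a]`
holds in any group acted on by automorphisms. For `g, g' ∈ Gₘ` and `a ∈ Kᵢ`, both `[g', a]` and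
`[g, a]` lie in `K_{m+i}`, so `[g, [g', a]] ∈ K_{2m+i}` and the commutator of `[g', a]` and `[g, a]`
lies in `K_{2m+2i}`; since `m ≥ 1`, both vanish in `K / K_{m+i+1}`, leaving `[g, a] ⬝ [g', a]`.
-/

open scoped commutatorElement

section MulAutCommutator

variable {G K : Type*} [Group G] [Group K]

def mulAutCommutator (φ : G →* MulAut K) (g : G) (a : K) : K := φ g a * a⁻¹

theorem mulAutCommutator_mul (φ : G →* MulAut K) (g g' : G) (a : K) :
    mulAutCommutator φ (g * g') a =
      mulAutCommutator φ g (mulAutCommutator φ g' a) * mulAutCommutator φ g' a *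
        mulAutCommutator φ g a := by
  simp only [mulAutCommutator, map_mul, MulAut.mul_apply, map_inv]
  group

end MulAutCommutator

theorem QuotientGroup.mk_mul_comm_of_commutatorElement_mem {K : Type*} [Group K]
    {N : Subgroup K} [N.Normal] {x y : K} (h : ⁅x, y⁆ ∈ N) :
    (x : K ⧸ N) * y = y * x := by
  rw [← commutatorElement_eq_one_iff_mul_comm]
  exact (map_commutatorElement (QuotientGroup.mk' N) x y).symm.trans
    ((QuotientGroup.eq_one_iff _).mpr h)

theorem Subgroup.normal_of_commutator_le_of_zero_eq_top {K : Type*} [Group K]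
    {Kf : ℕ → Subgroup K} (hK0 : Kf 0 = ⊤) (hcomm : ∀ i j, ⁅Kf i, Kf j⁆ ≤ Kf (i + j)) (n : ℕ) :
    (Kf n).Normal :=
  Subgroup.commutator_top_left_le_iff.mp (by simpa [hK0] using hcomm 0 n)

theorem johnson_tau_homomorphism_general {G K : Type*} [Group G] [Group K]
    (φ : G →* MulAut K) (Kf : ℕ → Subgroup K)
    (hK0 : Kf 0 = ⊤) (hdesc : ∀ i, Kf (i + 1) ≤ Kf i)
    (hcomm : ∀ i j, ⁅Kf i, Kf j⁆ ≤ Kf (i + j))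
    (G' : ℕ → Subgroup G)
    (hact : ∀ m n, ∀ g ∈ G' m, ∀ k ∈ Kf n, φ g k * k⁻¹ ∈ Kf (m + n)) :
    ∀ m, 1 ≤ m → ∀ g ∈ G' m, ∀ g' ∈ G' m, ∀ i, ∀ a ∈ Kf i,
      ((φ g a * a⁻¹) * (φ g' a * a⁻¹))⁻¹ *
        (φ (g * g') a * a⁻¹) ∈ Kf (m + i + 1) := by
  intro m hm g hg g' hg' i a ha
  have hanti : Antitone Kf := antitone_nat_of_succ_le hdesc
  have := Subgroup.normal_of_commutator_le_of_zero_eq_top hK0 hcomm (m + i + 1)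
  rw [← QuotientGroup.eq]
  change ((mulAutCommutator φ g a * mulAutCommutator φ g' a : K) : K ⧸ Kf (m + i + 1)) =
    (mulAutCommutator φ (g * g') a : K)
  rw [mulAutCommutator_mul]
  set c := mulAutCommutator φ g a
  set b := mulAutCommutator φ g' a
  have hc : c ∈ Kf (m + i) := hact m i g hg a ha
  have hb : b ∈ Kf (m + i) := hact m i g' hg' a ha
  have hd : mulAutCommutator φ g b ∈ Kf (m + i + 1) :=
    hanti (by omega) (hact m (m + i) g hg b hb)
  have hbc : ⁅b, c⁆ ∈ Kf (m + i + 1) :=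
    hanti (by omega) (hcomm _ _ (Subgroup.commutator_mem_commutator hb hc))
  simp only [QuotientGroup.mk_mul]
  rw [(QuotientGroup.eq_one_iff _).mpr hd, one_mul,
    QuotientGroup.mk_mul_comm_of_commutatorElement_mem hbc]

/-- Let an extended N-series `G_*` act on an extended N-series `K_*`.  For each
`m ≥ 1`, the `m`-th Johnson homomorphism `τₘ : Gₘ → Derₘ(K̄_•)`,
`τₘ(g)ᵢ(aK_{i+1}) = [g,a]K_{m+i+1}`, is a group homomorphism:
`τₘ(gg') = τₘ(g) + τₘ(g')`, i.e. in every degree `i ≥ 0` and for every `a ∈ Kᵢ`,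
`[gg', a] ≡ [g,a] ⬝ [g',a]  (mod K_{m+i+1})`, where `[g,a] = g(a)a⁻¹`. -/
theorem johnson_tau_homomorphism {G K : Type*} [Group G] [Group K]
    (φ : G →* MulAut K) (Kf : ℕ → Subgroup K)
    (hK0 : Kf 0 = ⊤) (hdesc : ∀ i, Kf (i + 1) ≤ Kf i)
    (hcomm : ∀ i j, ⁅Kf i, Kf j⁆ ≤ Kf (i + j))
    (G' : ℕ → Subgroup G)
    (hG'0 : G' 0 = ⊤) (hG'desc : ∀ i, G' (i + 1) ≤ G' i)
    (hG'comm : ∀ i j, ⁅G' i, G' j⁆ ≤ G' (i + j))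
    (hact : ∀ m n, ∀ g ∈ G' m, ∀ k ∈ Kf n, φ g k * k⁻¹ ∈ Kf (m + n)) :
    ∀ m, 1 ≤ m → ∀ g ∈ G' m, ∀ g' ∈ G' m, ∀ i, ∀ a ∈ Kf i,
      ((φ g a * a⁻¹) * (φ g' a * a⁻¹))⁻¹ *
        (φ (g * g') a * a⁻¹) ∈ Kf (m + i + 1) :=
  johnson_tau_homomorphism_general φ Kf hK0 hdesc hcomm G' hact
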